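/- Let 𝒢=(V,E) be a temporal graph, s,v,z∈V, and x,δ∈ℕ. Let P_1 and P_2 be x-traversal-delay-robust (s,v)-routes whose arrival time vectors t⃗_1 and t⃗_2 satisfy t⃗_1 ⪯ t⃗_2. If P' is a vertex sequence such that the concatenation P_2∘P' is an x-traversal-delay-robust (s,z)-route, then P_1∘P' is also an x-traversal-delay-robust (s,z)-route. -/

import Mathlib

/-- A time arc of a temporal graph: start vertex, end vertex, time label, traversal time. -/
structure TimeArc (V : Type) where
  src : V
  dst : V
  time : ℕ
  trav : ℕ
deriving DecidableEq

variable {V : Type}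

/-- `P` is a `D`-traversal-delayed temporal walk in the temporal graph with time-arc set `E`
(with delay time `δ`). -/
def IsTDWalk [DecidableEq V] (E D : Finset (TimeArc V)) (δ : ℕ)
    (P : List (TimeArc V)) : Prop :=
  (∀ e ∈ P, e ∈ E) ∧
  P.Chain' (fun e f => f.src = e.dst ∧
    e.time + e.trav + (if e ∈ D then δ else 0) ≤ f.time)

/-- `P` is a `D`-starting-delayed temporal walk in the temporal graph with time-arc set `E`
(with delay time `δ`). -/
def IsSDWalk [DecidableEq V] (E D : Finset (TimeArc V)) (δ : ℕ)
    (P : List (TimeArc V)) : Prop :=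
  (∀ e ∈ P, e ∈ E) ∧
  P.Chain' (fun e f => f.src = e.dst ∧
    e.time + e.trav + (if e ∈ D then δ else 0) ≤ f.time + (if f ∈ D then δ else 0))

/-- The sequence of vertices visited by a walk: the start vertex of its first arc followed by
the end vertices of all its arcs. -/
def visits : List (TimeArc V) → List V
  | [] => []
  | e :: es => e.src :: (e :: es).map TimeArc.dst

/-- The walk `P` follows the route `R`: the visited vertex sequence of `P` equals `R`
(the empty walk follows every single-vertex route). -/
def Follows (P : List (TimeArc V)) (R : List V) : Prop :=
  match P with
  | [] => ∃ v, R = [v]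
  | e :: es => visits (e :: es) = R

/-- `R` is a `D`-traversal-delayed route: some `D`-traversal-delayed temporal walk follows `R`. -/
def IsTDRoute [DecidableEq V] (E D : Finset (TimeArc V)) (δ : ℕ) (R : List V) : Prop :=
  ∃ P : List (TimeArc V), IsTDWalk E D δ P ∧ Follows P R

/-- `R` is a `D`-starting-delayed route: some `D`-starting-delayed temporal walk follows `R`. -/
def IsSDRoute [DecidableEq V] (E D : Finset (TimeArc V)) (δ : ℕ) (R : List V) : Prop :=
  ∃ P : List (TimeArc V), IsSDWalk E D δ P ∧ Follows P R

/-- `R` is `x`-traversal-delay-robust: it is a `D`-traversal-delayed route for every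
`D ⊆ E` with `|D| ≤ x`. -/
def TDRobust [DecidableEq V] (E : Finset (TimeArc V)) (δ x : ℕ) (R : List V) : Prop :=
  ∀ D : Finset (TimeArc V), D ⊆ E → D.card ≤ x → IsTDRoute E D δ R

/-- `R` is `x`-starting-delay-robust: it is a `D`-starting-delayed route for every
`D ⊆ E` with `|D| ≤ x`. -/
def SDRobust [DecidableEq V] (E : Finset (TimeArc V)) (δ x : ℕ) (R : List V) : Prop :=
  ∀ D : Finset (TimeArc V), D ⊆ E → D.card ≤ x → IsSDRoute E D δ R

/-- Earliest `D`-delayed arrival time of a route `R` (with traversal delays of `δ` on the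
arcs of `D`): the minimum over all `D`-traversal-delayed temporal walks following `R` of the
delayed arrival time of the last arc; `⊤` (i.e. `∞`) if no such walk exists. -/
noncomputable def earliestArrival [DecidableEq V] (E D : Finset (TimeArc V)) (δ : ℕ)
    (R : List V) : ℕ∞ :=
  sInf {m : ℕ∞ | ∃ P : List (TimeArc V), IsTDWalk E D δ P ∧ Follows P R ∧
    ∃ e : TimeArc V, P.getLast? = some e ∧
      m = ((e.time + e.trav + (if e ∈ D then δ else 0) : ℕ) : ℕ∞)}

/-- Worst-case arrival time of a route `R` for `y` delays: the maximum of the earliest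
`D`-delayed arrival time over all `D ⊆ E` with `|D| ≤ y`; for a single-vertex route it is `0`. -/
noncomputable def worstArrival [DecidableEq V] (E : Finset (TimeArc V)) (δ : ℕ)
    (R : List V) (y : ℕ) : ℕ∞ :=
  if R.length ≤ 1 then 0
  else sSup {m : ℕ∞ | ∃ D : Finset (TimeArc V), D ⊆ E ∧ D.card ≤ y ∧
    m = earliestArrival E D δ R}

set_option linter.unusedSectionVars false

section Aux
variable [DecidableEq V]

def rt (D : Finset (TimeArc V)) (δ : ℕ) (W : List (TimeArc V)) : ℕ :=
  match W.getLast? with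
  | none => 0
  | some e => e.time + e.trav + (if e ∈ D then δ else 0)

lemma rt_eq_of_getLast? {D : Finset (TimeArc V)} {δ : ℕ} {W : List (TimeArc V)}
    {e : TimeArc V} (h : W.getLast? = some e) :
    rt D δ W = e.time + e.trav + (if e ∈ D then δ else 0) := by
  simp [rt, h]

lemma rt_concat (D : Finset (TimeArc V)) (δ : ℕ) (W : List (TimeArc V)) (f : TimeArc V) :
    rt D δ (W ++ [f]) = f.time + f.trav + (if f ∈ D then δ else 0) :=
  rt_eq_of_getLast? (List.getLast?_concat (l := W))

noncomputable def minReady (E D : Finset (TimeArc V)) (δ : ℕ) (R : List V) : ℕ∞ :=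
  sInf {m : ℕ∞ | ∃ W : List (TimeArc V), IsTDWalk E D δ W ∧ Follows W R ∧
    m = ((rt D δ W : ℕ) : ℕ∞)}

lemma follows_ne_nil {W : List (TimeArc V)} {R : List V} (h : Follows W R)
    (hR : 2 ≤ R.length) : W ≠ [] := by
  intro he; subst he
  obtain ⟨v, rfl⟩ := h
  simp at hR

lemma visits_concat {W : List (TimeArc V)} (hW : W ≠ []) (f : TimeArc V) :
    visits (W ++ [f]) = visits W ++ [f.dst] := by
  obtain ⟨e, es, rfl⟩ := List.exists_cons_of_ne_nil hW
  simp [visits]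

lemma follows_iff_visits {W : List (TimeArc V)} {R : List V} (hW : W ≠ []) :
    Follows W R ↔ visits W = R := by
  obtain ⟨e, es, rfl⟩ := List.exists_cons_of_ne_nil hW
  rfl

lemma follows_getLast {W : List (TimeArc V)} {R : List V} (h : Follows W R)
    (hW : W ≠ []) {e : TimeArc V} (he : W.getLast? = some e) :
    R.getLast? = some e.dst := by
  have hv := (follows_iff_visits hW).1 h
  obtain ⟨W0, rfl⟩ := List.getLast?_eq_some_iff.1 he
  rcases List.eq_nil_or_concat' W0 with rfl | ⟨W1, a, rfl⟩
  · rw [← hv]; simp [visits]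
  · rw [← hv, visits_concat (by simp)]
    simp

lemma chain'_mem_imp {α : Type*} {Rl S : α → α → Prop} :
    ∀ {l : List α}, (∀ a ∈ l, ∀ b ∈ l, Rl a b → S a b) → l.Chain' Rl → l.Chain' S
  | [], _, _ => List.isChain_nil
  | [a], _, _ => List.isChain_singleton a
  | a :: b :: t, h, hc => by
    simp only [List.Chain', List.isChain_cons_cons] at hc ⊢
    refine ⟨h a (by simp) b (by simp) hc.1, chain'_mem_imp (fun x hx y hy => h x (by simp [hx]) y (by simp [hy])) hc.2⟩

lemma walk_tail {E D : Finset (TimeArc V)} {δ : ℕ} {e : TimeArc V} {es : List (TimeArc V)}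
    (h : IsTDWalk E D δ (e :: es)) : IsTDWalk E D δ es :=
  ⟨fun f hf => h.1 f (by simp [hf]), h.2.tail⟩

lemma time_le_rt {E D : Finset (TimeArc V)} {δ : ℕ} :
    ∀ {W : List (TimeArc V)}, IsTDWalk E D δ W → ∀ {g : TimeArc V}, g ∈ W → g.time ≤ rt D δ W
  | [], _, _, hg => by simp at hg
  | [e], h, g, hg => by
    simp at hg; subst hg
    rw [rt_eq_of_getLast? (by simp : ([g] : List (TimeArc V)).getLast? = some g)]
    omega
  | e :: f :: t, h, g, hg => by
    have htail : IsTDWalk E D δ (f :: t) := walk_tail h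
    have hrt : rt D δ (e :: f :: t) = rt D δ (f :: t) := by
      simp [rt, List.getLast?]
    rw [hrt]
    rcases List.mem_cons.1 hg with rfl | hg'
    · have hef := (List.isChain_cons_cons.1 h.2).1
      have : g.time ≤ f.time := by omega
      exact le_trans this (time_le_rt htail (by simp))
    · exact time_le_rt htail hg'

lemma minReady_le_rt {E D : Finset (TimeArc V)} {δ : ℕ} {R : List V} {W : List (TimeArc V)}
    (hw : IsTDWalk E D δ W) (hf : Follows W R) :
    minReady E D δ R ≤ ((rt D δ W : ℕ) : ℕ∞) :=
  sInf_le ⟨W, hw, hf, rfl⟩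

lemma exists_walk_of_minReady_le {E D : Finset (TimeArc V)} {δ : ℕ} {R : List V} {c : ℕ}
    (h : minReady E D δ R ≤ (c : ℕ∞)) :
    ∃ W : List (TimeArc V), IsTDWalk E D δ W ∧ Follows W R ∧ rt D δ W ≤ c := by
  by_contra hc
  push_neg at hc
  have hlow : ((c + 1 : ℕ) : ℕ∞) ≤ minReady E D δ R := by
    apply le_sInf
    rintro m ⟨W, hw, hf, rfl⟩
    have := hc W hw hf
    exact_mod_cast by omega
  have : ((c + 1 : ℕ) : ℕ∞) ≤ (c : ℕ∞) := le_trans hlow h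
  exact absurd (by exact_mod_cast this) (by omega)

lemma ite_subset_le {D D' : Finset (TimeArc V)} {δ : ℕ} (h : D ⊆ D') (e : TimeArc V) :
    (if e ∈ D then δ else 0) ≤ (if e ∈ D' then δ else 0) := by
  by_cases he : e ∈ D
  · simp [he, h he]
  · simp [he]

lemma walk_anti {E D D' : Finset (TimeArc V)} {δ : ℕ} {W : List (TimeArc V)}
    (hDD : D ⊆ D') (h : IsTDWalk E D' δ W) : IsTDWalk E D δ W := by
  refine ⟨h.1, h.2.imp ?_⟩
  rintro e f ⟨h1, h2⟩
  exact ⟨h1, le_trans (by have := ite_subset_le (δ := δ) hDD e; omega) h2⟩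

lemma rt_le_of_subset {D D' : Finset (TimeArc V)} {δ : ℕ} (hDD : D ⊆ D')
    (W : List (TimeArc V)) : rt D δ W ≤ rt D' δ W := by
  rcases hW : W.getLast? with _ | e
  · simp [rt, hW]
  · rw [rt_eq_of_getLast? hW, rt_eq_of_getLast? hW]
    have := ite_subset_le (δ := δ) hDD e; omega

lemma minReady_mono {E D D' : Finset (TimeArc V)} {δ : ℕ} {R : List V} (hDD : D ⊆ D') :
    minReady E D δ R ≤ minReady E D' δ R := by
  apply le_sInf
  rintro m ⟨W, hw, hf, rfl⟩
  exact le_trans (minReady_le_rt (walk_anti hDD hw) hf) (by exact_mod_cast rt_le_of_subset hDD W)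

lemma earliestArrival_eq_minReady {E D : Finset (TimeArc V)} {δ : ℕ} {R : List V}
    (hR : 2 ≤ R.length) : earliestArrival E D δ R = minReady E D δ R := by
  unfold earliestArrival minReady
  congr 1
  ext m
  constructor
  · rintro ⟨W, hw, hf, e, he, rfl⟩
    exact ⟨W, hw, hf, by rw [rt_eq_of_getLast? he]⟩
  · rintro ⟨W, hw, hf, rfl⟩
    have hW : W ≠ [] := follows_ne_nil hf hR
    refine ⟨W, hw, hf, W.getLast hW, List.getLast?_eq_getLast hW, ?_⟩
    rw [rt_eq_of_getLast? (List.getLast?_eq_getLast hW)]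

lemma minReady_le_worstArrival {E D : Finset (TimeArc V)} {δ : ℕ} {R : List V} {y : ℕ}
    (hR : R ≠ []) (hDE : D ⊆ E) (hDy : D.card ≤ y) :
    minReady E D δ R ≤ worstArrival E δ R y := by
  unfold worstArrival
  split_ifs with hlen
  · obtain ⟨v, rfl⟩ : ∃ v, R = [v] := by
      match R, hR, hlen with
      | [v], _, _ => exact ⟨v, rfl⟩
    have : minReady E D δ [v] ≤ ((rt D δ ([] : List (TimeArc V)) : ℕ) : ℕ∞) :=
      minReady_le_rt ⟨by simp, List.isChain_nil⟩ ⟨v, rfl⟩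
    simpa [rt] using this
  · push_neg at hlen
    rw [← earliestArrival_eq_minReady hlen]
    exact le_sSup ⟨D, hDE, hDy, rfl⟩

lemma exists_delay_of_le_worst {E : Finset (TimeArc V)} {δ : ℕ} {R2 : List V} {y : ℕ}
    {c : ℕ} (hR : R2 ≠ []) (h : (c : ℕ∞) ≤ worstArrival E δ R2 y) :
    ∃ D' : Finset (TimeArc V), D' ⊆ E ∧ D'.card ≤ y ∧
      (c : ℕ∞) ≤ minReady E D' δ R2 := by
  unfold worstArrival at h
  split_ifs at h with hlen
  · refine ⟨∅, by simp, by simp, ?_⟩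
    have : (c : ℕ∞) = 0 := le_antisymm h (by simp)
    simp [this]
  · push_neg at hlen
    set S := {m : ℕ∞ | ∃ D : Finset (TimeArc V), D ⊆ E ∧ D.card ≤ y ∧
      m = earliestArrival E D δ R2} with hS
    have hne : S.Nonempty := ⟨earliestArrival E ∅ δ R2, ∅, by simp, by simp, rfl⟩
    have hfin : S.Finite := by
      apply Set.Finite.subset (Set.Finite.image (fun D => earliestArrival E D δ R2)
        E.powerset.finite_toSet)
      rintro m ⟨D, hDE, _, rfl⟩
      exact ⟨D, by simpa [Finset.mem_powerset] using hDE, rfl⟩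
    obtain ⟨D', hD'E, hD'y, hval⟩ := hne.csSup_mem hfin
    refine ⟨D', hD'E, hD'y, ?_⟩
    rw [← earliestArrival_eq_minReady hlen, ← hval]
    exact h

/-- Split a walk following `R ++ [w]` into a prefix walk following `R` and a last arc. -/
lemma walk_split {E D : Finset (TimeArc V)} {δ : ℕ} {Q : List (TimeArc V)} {R : List V}
    {w v : V} (hw : IsTDWalk E D δ Q) (hf : Follows Q (R ++ [w])) (hR : R ≠ [])
    (hv : R.getLast? = some v) :
    ∃ (Q0 : List (TimeArc V)) (f : TimeArc V), Q = Q0 ++ [f] ∧ IsTDWalk E D δ Q0 ∧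
      Follows Q0 R ∧ f.dst = w ∧ f.src = v ∧ rt D δ Q0 ≤ f.time := by
  have hlen : 2 ≤ (R ++ [w]).length := by
    rcases List.exists_cons_of_ne_nil hR with ⟨a, R', rfl⟩; simp
  have hQ : Q ≠ [] := follows_ne_nil hf hlen
  obtain ⟨Q0, f, rfl⟩ : ∃ Q0 f, Q = Q0 ++ [f] := by
    obtain ⟨Q0, f, h⟩ := List.eq_nil_or_concat' Q |>.resolve_left hQ
    exact ⟨Q0, f, h⟩
  have hchain := hw.2
  simp only [List.Chain', List.isChain_append] at hchain
  obtain ⟨hc0, -, hjunc⟩ := hchain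
  have hw0 : IsTDWalk E D δ Q0 := ⟨fun e he => hw.1 e (by simp [he]), hc0⟩
  have hvis := (follows_iff_visits hQ).1 hf
  rcases List.eq_nil_or_concat' Q0 with rfl | ⟨Q1, a, rfl⟩
  · -- Q = [f], so R = [f.src], w = f.dst
    have : ([f.src, f.dst] : List V) = R ++ [w] := by simpa [visits] using hvis
    obtain ⟨u, rfl⟩ : ∃ u, R = [u] := by
      apply List.length_eq_one_iff.1
      have := congrArg List.length this
      simp at this; omega
    have h1 : f.src = u ∧ f.dst = w := by simpa using this
    refine ⟨[], f, rfl, ⟨by simp, List.isChain_nil⟩, ⟨u, rfl⟩, h1.2, ?_, by simp [rt]⟩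
    rw [h1.1]; simpa using hv
  · -- Q0 nonempty
    have hQ0ne : (Q1 ++ [a] : List (TimeArc V)) ≠ [] := by simp
    have hvis0 : visits (Q1 ++ [a]) ++ [f.dst] = R ++ [w] := by
      rw [← visits_concat hQ0ne f]; exact hvis
    have hfw : f.dst = w := by
      have := congrArg List.getLast? hvis0
      simpa [List.getLast?_concat] using this
    have hR0 : visits (Q1 ++ [a]) = R := by
      have := congrArg List.dropLast hvis0
      simpa [List.dropLast_concat] using this
    have hfol0 : Follows (Q1 ++ [a]) R := (follows_iff_visits hQ0ne).2 hR0
    have hj := hjunc a (by simp [List.getLast?_concat]) f (by simp)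
    have hlast : (Q1 ++ [a] : List (TimeArc V)).getLast? = some a := List.getLast?_concat
    have hadst : R.getLast? = some a.dst := follows_getLast hfol0 hQ0ne hlast
    have hav : a.dst = v := by rw [hv] at hadst; exact (Option.some_inj.1 hadst).symm
    refine ⟨Q1 ++ [a], f, rfl, hw0, hfol0, hfw, by rw [hj.1, hav], ?_⟩
    rw [rt_eq_of_getLast? hlast]
    exact hj.2

/-- Glue an arc onto a walk. -/
lemma walk_glue {E D : Finset (TimeArc V)} {δ : ℕ} {W1 : List (TimeArc V)} {R : List V}
    {v : V} {f : TimeArc V} (hw : IsTDWalk E D δ W1) (hf : Follows W1 R)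
    (hv : R.getLast? = some v) (hfE : f ∈ E) (hsrc : f.src = v) (hrt : rt D δ W1 ≤ f.time) :
    IsTDWalk E D δ (W1 ++ [f]) ∧ Follows (W1 ++ [f]) (R ++ [f.dst]) := by
  constructor
  · refine ⟨?_, ?_⟩
    · intro e he
      rcases List.mem_append.1 he with h | h
      · exact hw.1 e h
      · simp at h; subst h; exact hfE
    · simp only [List.Chain', List.isChain_append]
      refine ⟨hw.2, by simp, ?_⟩
      intro e he g hg
      simp at hg; subst hg
      have hW1 : W1 ≠ [] := by rintro rfl; simp at he
      have hedst : R.getLast? = some e.dst := follows_getLast hf hW1 he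
      have : e.dst = v := by rw [hv] at hedst; exact (Option.some_inj.1 hedst).symm
      refine ⟨by rw [hsrc, this], ?_⟩
      rw [rt_eq_of_getLast? he] at hrt
      exact hrt
  · rcases List.eq_nil_or_concat' W1 with rfl | ⟨W0, a, rfl⟩
    · obtain ⟨u, rfl⟩ := hf
      have huv : u = v := by simpa using hv
      show visits [f] = [u] ++ [f.dst]
      simp [visits, hsrc, huv]
    · have hne : (W0 ++ [a] : List (TimeArc V)) ≠ [] := by simp
      have := (follows_iff_visits hne).1 hf
      refine (follows_iff_visits (by simp)).2 ?_
      rw [visits_concat hne, this]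

lemma visits_take {W : List (TimeArc V)} (hW : W ≠ []) {k : ℕ} (hk : 1 ≤ k) :
    visits (W.take k) = (visits W).take (k + 1) := by
  obtain ⟨e, es, rfl⟩ := List.exists_cons_of_ne_nil hW
  obtain ⟨k', rfl⟩ : ∃ k', k = k' + 1 := ⟨k - 1, by omega⟩
  simp [visits, List.map_take]

lemma robust_prefix {E : Finset (TimeArc V)} {δ x : ℕ} {Q rest : List V}
    (h : TDRobust E δ x (Q ++ rest)) (hQ : 2 ≤ Q.length) : TDRobust E δ x Q := by
  intro D hDE hDx
  obtain ⟨W, hw, hf⟩ := h D hDE hDx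
  have hlen : 2 ≤ (Q ++ rest).length := by simp; omega
  have hW : W ≠ [] := follows_ne_nil hf hlen
  refine ⟨W.take (Q.length - 1), ⟨fun e he => hw.1 e (List.mem_of_mem_take he), hw.2.take _⟩, ?_⟩
  have hvis := (follows_iff_visits hW).1 hf
  have htk : visits (W.take (Q.length - 1)) = Q := by
    rw [visits_take hW (by omega), hvis]
    have : Q.length - 1 + 1 = Q.length := by omega
    rw [this, List.take_left]
  refine (follows_iff_visits ?_).2 htk
  intro hnil
  rw [hnil] at htk
  have : Q = [] := by simpa [visits] using htk.symm
  simp [this] at hQ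

lemma minReady_filter_lt {E D : Finset (TimeArc V)} {δ : ℕ} {R : List V} {aN : ℕ}
    (ha : minReady E D δ R = (aN : ℕ∞)) :
    (aN : ℕ∞) ≤ minReady E (D.filter fun f => f.time < aN) δ R := by
  set D0 := D.filter (fun f => f.time < aN) with hD0
  apply le_sInf
  rintro m ⟨W, hw, hf, rfl⟩
  by_cases hc : ∃ g ∈ W, g ∈ D ∧ aN ≤ g.time
  · obtain ⟨g, hgW, hgD, hgt⟩ := hc
    have := time_le_rt hw hgW
    exact_mod_cast le_trans hgt (le_trans this (le_refl _))
  · push_neg at hc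
    -- every arc of W that is in D has time < aN, so indicators agree
    have hiff : ∀ g ∈ W, ((g ∈ D0) ↔ (g ∈ D)) := by
      intro g hg
      simp only [hD0, Finset.mem_filter]
      exact ⟨fun h => h.1, fun h => ⟨h, by have := hc g hg h; omega⟩⟩
    have hwD : IsTDWalk E D δ W := by
      refine ⟨hw.1, chain'_mem_imp ?_ hw.2⟩
      rintro e he f hfm ⟨h1, h2⟩
      refine ⟨h1, ?_⟩
      have : (if e ∈ D then δ else 0) = (if e ∈ D0 then δ else 0) := by
        by_cases hmem : e ∈ D
        · rw [if_pos hmem, if_pos ((hiff e he).2 hmem)]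
        · rw [if_neg hmem, if_neg (fun hh => hmem ((hiff e he).1 hh))]
      omega
    have hrt : rt D δ W = rt D0 δ W := by
      rcases hWl : W.getLast? with _ | e
      · simp [rt, hWl]
      · have heW : e ∈ W := by
          obtain ⟨l', rfl⟩ := List.getLast?_eq_some_iff.1 hWl
          simp
        rw [rt_eq_of_getLast? hWl, rt_eq_of_getLast? hWl]
        have : (if e ∈ D then δ else 0) = (if e ∈ D0 then δ else 0) := by
          by_cases hmem : e ∈ D
          · rw [if_pos hmem, if_pos ((hiff e heW).2 hmem)]
          · rw [if_neg hmem, if_neg (fun hh => hmem ((hiff e heW).1 hh))]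
        omega
    calc ((aN : ℕ) : ℕ∞) = minReady E D δ R := ha.symm
      _ ≤ ((rt D δ W : ℕ) : ℕ∞) := minReady_le_rt hwD hf
      _ = ((rt D0 δ W : ℕ) : ℕ∞) := by rw [hrt]

lemma minReady_ne_top {E D : Finset (TimeArc V)} {δ x : ℕ} {R : List V}
    (h1r : TDRobust E δ x R) (hDE : D ⊆ E) (hDx : D.card ≤ x) :
    ∃ aN : ℕ, minReady E D δ R = (aN : ℕ∞) := by
  obtain ⟨W, hw, hf⟩ := h1r D hDE hDx
  have hfin : minReady E D δ R ≤ ((rt D δ W : ℕ) : ℕ∞) := minReady_le_rt hw hf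
  have hne : minReady E D δ R ≠ ⊤ := by
    intro htop
    rw [htop] at hfin
    exact absurd (top_le_iff.1 hfin) (by simp)
  obtain ⟨b, hb⟩ := WithTop.ne_top_iff_exists.1 hne
  exact ⟨b, hb.symm⟩

lemma step_robust {E : Finset (TimeArc V)} {δ x : ℕ} {P1 P2 : List V} {v w : V}
    (h1v : P1.getLast? = some v) (h2v : P2.getLast? = some v)
    (h1r : TDRobust E δ x P1)
    (hle : ∀ y : ℕ, y ≤ x → worstArrival E δ P1 y ≤ worstArrival E δ P2 y)
    (h2r' : TDRobust E δ x (P2 ++ [w])) :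
    TDRobust E δ x (P1 ++ [w]) := by
  intro D hDE hDx
  have hP1 : P1 ≠ [] := by rintro rfl; simp at h1v
  have hP2 : P2 ≠ [] := by rintro rfl; simp at h2v
  obtain ⟨aN, haN⟩ := minReady_ne_top h1r hDE hDx
  have h1 : (aN : ℕ∞) ≤ worstArrival E δ P1 D.card := by
    rw [← haN]; exact minReady_le_worstArrival hP1 hDE le_rfl
  have h2 : (aN : ℕ∞) ≤ worstArrival E δ P2 D.card := le_trans h1 (hle D.card hDx)
  obtain ⟨D', hD'E, hD'c, hD'le⟩ := exists_delay_of_le_worst hP2 h2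
  obtain ⟨Q, hwQ, hfQ⟩ := h2r' D' hD'E (le_trans hD'c hDx)
  obtain ⟨Q0, f, rfl, hwQ0, hfQ0, hfdst, hfsrc, hrtQ0⟩ := walk_split hwQ hfQ hP2 h2v
  have hfE : f ∈ E := hwQ.1 f (by simp)
  have haf : (aN : ℕ∞) ≤ (f.time : ℕ∞) := by
    calc (aN : ℕ∞) ≤ minReady E D' δ P2 := hD'le
      _ ≤ ((rt D' δ Q0 : ℕ) : ℕ∞) := minReady_le_rt hwQ0 hfQ0
      _ ≤ (f.time : ℕ∞) := by exact_mod_cast hrtQ0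
  obtain ⟨W1, hw1, hf1, hrt1⟩ := exists_walk_of_minReady_le
    (le_trans (le_of_eq haN) haf)
  obtain ⟨hglue1, hglue2⟩ := walk_glue hw1 hf1 h1v hfE hfsrc hrt1
  exact ⟨W1 ++ [f], hglue1, by rwa [hfdst] at hglue2⟩

lemma step_dominance {E : Finset (TimeArc V)} {δ x : ℕ} {P1 P2 : List V} {v w : V}
    (h1v : P1.getLast? = some v) (h2v : P2.getLast? = some v)
    (h1r : TDRobust E δ x P1)
    (hle : ∀ y : ℕ, y ≤ x → worstArrival E δ P1 y ≤ worstArrival E δ P2 y) :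
    ∀ y : ℕ, y ≤ x → worstArrival E δ (P1 ++ [w]) y ≤ worstArrival E δ (P2 ++ [w]) y := by
  intro y hyx
  have hP1 : P1 ≠ [] := by rintro rfl; simp at h1v
  have hP2 : P2 ≠ [] := by rintro rfl; simp at h2v
  have hlen1 : 2 ≤ (P1 ++ [w]).length := by
    rcases List.exists_cons_of_ne_nil hP1 with ⟨a, t, rfl⟩; simp
  have hlen2 : 2 ≤ (P2 ++ [w]).length := by
    rcases List.exists_cons_of_ne_nil hP2 with ⟨a, t, rfl⟩; simp
  rw [worstArrival, worstArrival, if_neg (by omega), if_neg (by omega)]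
  apply sSup_le
  rintro m ⟨D, hDE, hDy, rfl⟩
  obtain ⟨aN, haN⟩ := minReady_ne_top h1r hDE (le_trans hDy hyx)
  set D0 := D.filter (fun f => f.time < aN) with hD0def
  have hD0sub : D0 ⊆ D := Finset.filter_subset _ _
  have haN0 : (aN : ℕ∞) ≤ minReady E D0 δ P1 := minReady_filter_lt haN
  have h1 : (aN : ℕ∞) ≤ worstArrival E δ P1 D0.card :=
    le_trans haN0 (minReady_le_worstArrival hP1 (le_trans hD0sub hDE) le_rfl)
  have hD0x : D0.card ≤ x :=
    le_trans (Finset.card_le_card hD0sub) (le_trans hDy hyx)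
  have h2 : (aN : ℕ∞) ≤ worstArrival E δ P2 D0.card := le_trans h1 (hle D0.card hD0x)
  obtain ⟨D', hD'E, hD'c, hD'le⟩ := exists_delay_of_le_worst hP2 h2
  set Dt := D' ∪ D.filter (fun f => ¬ f.time < aN) with hDtdef
  have hDtE : Dt ⊆ E := Finset.union_subset hD'E (le_trans (Finset.filter_subset _ _) hDE)
  have hDtc : Dt.card ≤ y := by
    have hsplit : D0.card + (D.filter (fun f => ¬ f.time < aN)).card = D.card :=
      Finset.card_filter_add_card_filter_not _
    calc Dt.card ≤ D'.card + (D.filter (fun f => ¬ f.time < aN)).card :=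
          Finset.card_union_le _ _
      _ ≤ D0.card + (D.filter (fun f => ¬ f.time < aN)).card := by omega
      _ = D.card := hsplit
      _ ≤ y := hDy
  -- show earliestArrival E D δ (P1++[w]) ≤ earliestArrival E Dt δ (P2++[w])
  have hkey : earliestArrival E D δ (P1 ++ [w]) ≤ earliestArrival E Dt δ (P2 ++ [w]) := by
    rw [earliestArrival_eq_minReady hlen1, earliestArrival_eq_minReady hlen2]
    apply le_sInf
    rintro m ⟨Q, hwQ, hfQ, rfl⟩
    obtain ⟨Q0, f, rfl, hwQ0, hfQ0, hfdst, hfsrc, hrtQ0⟩ := walk_split hwQ hfQ hP2 h2v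
    have hfE : f ∈ E := hwQ.1 f (by simp)
    have haf : (aN : ℕ∞) ≤ (f.time : ℕ∞) := by
      calc (aN : ℕ∞) ≤ minReady E D' δ P2 := hD'le
        _ ≤ minReady E Dt δ P2 := minReady_mono Finset.subset_union_left
        _ ≤ ((rt Dt δ Q0 : ℕ) : ℕ∞) := minReady_le_rt hwQ0 hfQ0
        _ ≤ (f.time : ℕ∞) := by exact_mod_cast hrtQ0
    have hafN : aN ≤ f.time := by exact_mod_cast haf
    obtain ⟨W1, hw1, hf1, hrt1⟩ := exists_walk_of_minReady_le
      (le_trans (le_of_eq haN) haf)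
    obtain ⟨hglue1, hglue2⟩ := walk_glue hw1 hf1 h1v hfE hfsrc hrt1
    have helem : minReady E D δ (P1 ++ [w]) ≤
        ((rt D δ (W1 ++ [f]) : ℕ) : ℕ∞) :=
      minReady_le_rt hglue1 (by rwa [hfdst] at hglue2)
    refine le_trans helem ?_
    rw [rt_concat, rt_concat]
    have hite : (if f ∈ D then δ else 0) ≤ (if f ∈ Dt then δ else 0) := by
      by_cases hfD : f ∈ D
      · have : f ∈ Dt := by
          rw [hDtdef]
          exact Finset.mem_union_right _ (Finset.mem_filter.2 ⟨hfD, by omega⟩)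
        simp [hfD, this]
      · simp [hfD]
    exact_mod_cast by omega
  exact le_trans hkey (le_sSup ⟨Dt, hDtE, hDtc, rfl⟩)

lemma main_ind {E : Finset (TimeArc V)} {δ x : ℕ} :
    ∀ (P' : List V) (P1 P2 : List V) (v : V),
      P1.getLast? = some v → P2.getLast? = some v →
      TDRobust E δ x P1 → TDRobust E δ x P2 →
      (∀ y : ℕ, y ≤ x → worstArrival E δ P1 y ≤ worstArrival E δ P2 y) →
      TDRobust E δ x (P2 ++ P') → TDRobust E δ x (P1 ++ P')
  | [], P1, P2, v, h1v, h2v, h1r, h2r, hle, hr => by simpa using h1r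
  | w :: rest, P1, P2, v, h1v, h2v, h1r, h2r, hle, hr => by
    have hP2 : P2 ≠ [] := by rintro rfl; simp at h2v
    have hassoc : P2 ++ w :: rest = (P2 ++ [w]) ++ rest := by simp
    have hQ2r : TDRobust E δ x (P2 ++ [w]) := by
      apply robust_prefix (rest := rest) (by rwa [← hassoc])
      rcases List.exists_cons_of_ne_nil hP2 with ⟨a, t, rfl⟩; simp
    have hQ1r : TDRobust E δ x (P1 ++ [w]) := step_robust h1v h2v h1r hle hQ2r
    have hQle := step_dominance (w := w) h1v h2v h1r hle
    have h1w : (P1 ++ [w]).getLast? = some w := List.getLast?_concat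
    have h2w : (P2 ++ [w]).getLast? = some w := List.getLast?_concat
    have := main_ind rest (P1 ++ [w]) (P2 ++ [w]) w h1w h2w hQ1r hQ2r hQle
      (by rwa [← hassoc])
    simpa using this

end Aux

theorem statement13 {V : Type} [DecidableEq V] (E : Finset (TimeArc V))
    (s v z : V) (x δ : ℕ) (P1 P2 : List V)
    (h1s : P1.head? = some s) (h1v : P1.getLast? = some v) (h1r : TDRobust E δ x P1)
    (h2s : P2.head? = some s) (h2v : P2.getLast? = some v) (h2r : TDRobust E δ x P2)
    (hle : ∀ y : ℕ, y ≤ x → worstArrival E δ P1 y ≤ worstArrival E δ P2 y)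
    (P' : List V)
    (hs : (P2 ++ P').head? = some s) (hz : (P2 ++ P').getLast? = some z)
    (hr : TDRobust E δ x (P2 ++ P')) :
    (P1 ++ P').head? = some s ∧ (P1 ++ P').getLast? = some z ∧
      TDRobust E δ x (P1 ++ P') := by
  have hP1 : P1 ≠ [] := by rintro rfl; simp at h1s
  refine ⟨?_, ?_, main_ind P' P1 P2 v h1v h2v h1r h2r hle hr⟩
  · rcases List.exists_cons_of_ne_nil hP1 with ⟨a, t, rfl⟩
    simpa using h1s
  · rcases heq : P' with _ | ⟨w, rest⟩
    · rw [heq] at hz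
      simp only [List.append_nil] at hz ⊢
      rw [h2v] at hz
      rw [h1v, Option.some_inj.1 hz]
    · have hne : P' ≠ [] := by rw [heq]; simp
      rw [← heq]
      rw [List.getLast?_append_of_ne_nil _ hne] at hz ⊢
      exact hz
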